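/- If R = R¹⊗R²⊗R³ ∈ A⊗A⊗A satisfies the centralizing condition R¹⊗aR²⊗R³ = R¹⊗R²⊗R³a for all a ∈ A and the normalizing conditions R¹R²⊗R³ = 1⊗1 and R²⊗R³R¹ = 1⊗1, then R is invariant under cyclic permutation of the tensor factors: R¹⊗R²⊗R³ = R²⊗R³⊗R¹ = R³⊗R¹⊗R². -/

import Mathlib

/-!
Contracting the centralizing condition with the two normalizing conditions gives, in `A ⊗ A`,
`b R¹ a R² ⊗ R³ = b ⊗ a` and `R² ⊗ R³ a R¹ b = a ⊗ b` for all `a b`. The second identity with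
`a = R¹`, `b = R²` expands `R` into `r² ⊗ r³ R¹ r¹ R² ⊗ R³`, and the first one with `a = r¹`,
`b = r³` collapses this to `r² ⊗ r³ ⊗ r¹`. Rotating this identity once more gives the third form.
-/

open TensorProduct

namespace TensorProduct

variable {R M N P : Type*} [CommSemiring R] [AddCommMonoid M] [AddCommMonoid N]
  [AddCommMonoid P] [Module R M] [Module R N] [Module R P]

def rotate : M ⊗[R] N ⊗[R] P ≃ₗ[R] N ⊗[R] P ⊗[R] M :=
  TensorProduct.assoc R M N P ≪≫ₗ TensorProduct.comm R M (N ⊗[R] P)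

@[simp]
theorem rotate_tmul (m : M) (n : N) (p : P) : rotate (m ⊗ₜ[R] n ⊗ₜ[R] p) = n ⊗ₜ p ⊗ₜ m :=
  rfl

end TensorProduct

section CyclicInvariance

variable {k A ι : Type*} [CommRing k] [Ring A] [Algebra k A] {s : Finset ι} {x y z : ι → A}

theorem sum_mul_mul_mul_tmul_eq_tmul
    (hcen : ∀ a : A,
      ∑ i ∈ s, x i ⊗ₜ[k] (a * y i) ⊗ₜ[k] z i = ∑ i ∈ s, x i ⊗ₜ[k] y i ⊗ₜ[k] (z i * a))
    (hnorm : ∑ i ∈ s, (x i * y i) ⊗ₜ[k] z i = (1 : A) ⊗ₜ[k] (1 : A)) (a b : A) :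
    ∑ i ∈ s, (b * x i * a * y i) ⊗ₜ[k] z i = b ⊗ₜ[k] a := by
  have hcontract : ∑ i ∈ s, (x i * (a * y i)) ⊗ₜ[k] z i
      = ∑ i ∈ s, (x i * y i) ⊗ₜ[k] (z i * a) := by
    simpa only [map_sum, LinearMap.rTensor_tmul, LinearMap.mul'_apply]
      using congrArg (LinearMap.rTensor A (LinearMap.mul' k A)) (hcen a)
  calc ∑ i ∈ s, (b * x i * a * y i) ⊗ₜ[k] z i
      = (b ⊗ₜ 1) * ∑ i ∈ s, (x i * (a * y i)) ⊗ₜ[k] z i := by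
        simp only [Finset.mul_sum, Algebra.TensorProduct.tmul_mul_tmul, one_mul, mul_assoc]
    _ = (b ⊗ₜ 1) * ((∑ i ∈ s, (x i * y i) ⊗ₜ[k] z i) * (1 ⊗ₜ a)) := by
        simp only [hcontract, Finset.sum_mul, Algebra.TensorProduct.tmul_mul_tmul, mul_one]
    _ = b ⊗ₜ[k] a := by
        rw [hnorm]; simp only [Algebra.TensorProduct.tmul_mul_tmul, one_mul, mul_one]

theorem sum_tmul_mul_mul_mul_eq_tmul
    (hcen : ∀ a : A,
      ∑ i ∈ s, x i ⊗ₜ[k] (a * y i) ⊗ₜ[k] z i = ∑ i ∈ s, x i ⊗ₜ[k] y i ⊗ₜ[k] (z i * a))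
    (hnorm : ∑ i ∈ s, y i ⊗ₜ[k] (z i * x i) = (1 : A) ⊗ₜ[k] (1 : A)) (a b : A) :
    ∑ i ∈ s, y i ⊗ₜ[k] (z i * a * x i * b) = a ⊗ₜ[k] b := by
  have hcontract : ∑ i ∈ s, (a * y i) ⊗ₜ[k] (z i * x i)
      = ∑ i ∈ s, y i ⊗ₜ[k] (z i * a * x i) := by
    simpa only [map_sum, LinearMap.comp_apply, LinearEquiv.coe_coe, rotate_tmul,
      TensorProduct.assoc_tmul, LinearMap.lTensor_tmul, LinearMap.mul'_apply]
      using congrArg (LinearMap.lTensor A (LinearMap.mul' k A) ∘ₗ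
        (TensorProduct.assoc k A A A).toLinearMap ∘ₗ rotate.toLinearMap) (hcen a)
  calc ∑ i ∈ s, y i ⊗ₜ[k] (z i * a * x i * b)
      = (a ⊗ₜ 1) * (∑ i ∈ s, y i ⊗ₜ[k] (z i * x i)) * (1 ⊗ₜ b) := by
        simp only [Finset.mul_sum, Finset.sum_mul, Algebra.TensorProduct.tmul_mul_tmul,
          one_mul, mul_one, hcontract]
    _ = a ⊗ₜ[k] b := by
        rw [hnorm]; simp only [Algebra.TensorProduct.tmul_mul_tmul, one_mul, mul_one]

theorem sum_tmul_tmul_eq_sum_tmul_tmul_rotate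
    (hcen : ∀ a : A,
      ∑ i ∈ s, x i ⊗ₜ[k] (a * y i) ⊗ₜ[k] z i = ∑ i ∈ s, x i ⊗ₜ[k] y i ⊗ₜ[k] (z i * a))
    (hnorm1 : ∑ i ∈ s, (x i * y i) ⊗ₜ[k] z i = (1 : A) ⊗ₜ[k] (1 : A))
    (hnorm2 : ∑ i ∈ s, y i ⊗ₜ[k] (z i * x i) = (1 : A) ⊗ₜ[k] (1 : A)) :
    ∑ i ∈ s, x i ⊗ₜ[k] y i ⊗ₜ[k] z i = ∑ i ∈ s, y i ⊗ₜ[k] z i ⊗ₜ[k] x i := by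
  have hcollapse (j : ι) :
      ∑ i ∈ s, y j ⊗ₜ[k] (z j * x i * x j * y i) ⊗ₜ[k] z i = y j ⊗ₜ[k] z j ⊗ₜ[k] x j := by
    rw [← assoc_symm_tmul, ← sum_mul_mul_mul_tmul_eq_tmul hcen hnorm1 (x j) (z j), tmul_sum,
      map_sum]
    simp only [assoc_symm_tmul, mul_assoc]
  calc ∑ i ∈ s, x i ⊗ₜ[k] y i ⊗ₜ[k] z i
      = ∑ i ∈ s, (∑ j ∈ s, y j ⊗ₜ[k] (z j * x i * x j * y i)) ⊗ₜ[k] z i := by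
        simp only [sum_tmul_mul_mul_mul_eq_tmul hcen hnorm2]
    _ = ∑ j ∈ s, ∑ i ∈ s, y j ⊗ₜ[k] (z j * x i * x j * y i) ⊗ₜ[k] z i := by
        simp only [sum_tmul]; exact Finset.sum_comm
    _ = ∑ j ∈ s, y j ⊗ₜ[k] z j ⊗ₜ[k] x j := Finset.sum_congr rfl fun j _ ↦ hcollapse j

end CyclicInvariance

theorem cyclic_invariance_of_R_matrix
    (k A : Type*) [CommRing k] [Ring A] [Algebra k A]
    (ι : Type*) (s : Finset ι) (x y z : ι → A)
    (hcen : ∀ a : A,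
      ∑ i ∈ s, x i ⊗ₜ[k] (a * y i) ⊗ₜ[k] z i
        = ∑ i ∈ s, x i ⊗ₜ[k] y i ⊗ₜ[k] (z i * a))
    (hnorm1 : ∑ i ∈ s, (x i * y i) ⊗ₜ[k] z i = (1 : A) ⊗ₜ[k] (1 : A))
    (hnorm2 : ∑ i ∈ s, y i ⊗ₜ[k] (z i * x i) = (1 : A) ⊗ₜ[k] (1 : A)) :
    (∑ i ∈ s, x i ⊗ₜ[k] y i ⊗ₜ[k] z i = ∑ i ∈ s, y i ⊗ₜ[k] z i ⊗ₜ[k] x i) ∧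
    (∑ i ∈ s, x i ⊗ₜ[k] y i ⊗ₜ[k] z i = ∑ i ∈ s, z i ⊗ₜ[k] x i ⊗ₜ[k] y i) := by
  have hrot := sum_tmul_tmul_eq_sum_tmul_tmul_rotate hcen hnorm1 hnorm2
  have hrot₂ : ∑ i ∈ s, y i ⊗ₜ[k] z i ⊗ₜ[k] x i = ∑ i ∈ s, z i ⊗ₜ[k] x i ⊗ₜ[k] y i := by
    simpa only [map_sum, rotate_tmul] using congrArg rotate hrot
  exact ⟨hrot, hrot.trans hrot₂⟩
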